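/- arXiv:math/0501398 — 3 statements merged into one kernel-verified Lean document; each statement's English description precedes it below -/
import Mathlib

section
/- Let V be a finite-dimensional representation of sl(2,ℂ) with standard basis (H,E,F). Then V decomposes as a direct sum of subspaces V = (range of the action of F) ⊕ (kernel of the action of E). -/
/-!
Everything is read off the weights of `H`. The space `range F ⊓ ker E` is `H`-stable, so if it
is nonzero it contains an `H`-eigenvector `v`; this is a primitive vector, hence of weight
`n ∈ ℕ`, and `v = F w` for some `w` of generalized weight `n + 2`. Then `E (F w) = 0`, and if
`w ≠ 0` the last nonzero `E ^ m w` is, by `[E ^ (m + 1), F] = (m + 1) (H - m) E ^ m`, an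
eigenvector of weight `m`, although its generalized weight is `n + 2 + 2 m`. Hence
`range F ⊓ ker E = ⊥`; the same for the triple `(-H, F, E)` gives `range E ⊓ ker F = ⊥`, and
rank–nullity turns the two disjointness statements into complementarity.
-/

open Module End
open Set (MapsTo mapsTo_id)

lemma pow_succ_mul_sub_mul_pow_succ {A : Type*} [Ring A] {H E F : A}
    (hHE : H * E - E * H = 2 * E) (hEF : E * F - F * E = H) (k : ℕ) :
    E ^ (k + 1) * F - F * E ^ (k + 1) = (k + 1) * ((H - k) * E ^ k) := by
  induction k with
  | zero => simpa using hEF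
  | succ k ih =>
    have hEH : E * (H - k) = (H - (k + 2 : A)) * E := by
      have hEH' : E * H = H * E - 2 * E := by rw [← hHE]; abel
      rw [mul_sub, hEH', ← (Nat.cast_commute k E).eq]
      noncomm_ring
    calc E ^ (k + 1 + 1) * F - F * E ^ (k + 1 + 1)
        = E * (E ^ (k + 1) * F - F * E ^ (k + 1)) + (E * F - F * E) * E ^ (k + 1) := by
          rw [pow_succ' E (k + 1)]; noncomm_ring
      _ = (k + 1) * ((H - (k + 2 : A)) * E ^ (k + 1)) + H * E ^ (k + 1) := by
          rw [ih, hEF, ← mul_assoc, ← ((Nat.cast_commute k E).add_left (.one_left E)).eq,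
            mul_assoc, ← mul_assoc E, hEH, mul_assoc, ← pow_succ']
      _ = _ := by push_cast; noncomm_ring

namespace Module.End

section CommRing

variable {R M : Type*} [CommRing R] [AddCommGroup M] [Module R M] {A B : End R M} {c : R}

lemma semiconjBy_sub_smul_one_of_mul_sub_mul (h : A * B - B * A = c • B) (μ : R) :
    SemiconjBy B (A - μ • 1) (A - (μ + c) • 1) := by
  simp only [SemiconjBy, mul_sub, sub_mul, add_mul, smul_mul_assoc, mul_smul_comm, mul_one, one_mul,
    add_smul]
  rw [← h]
  abel

lemma mapsTo_maxGenEigenspace_of_mul_sub_mul (h : A * B - B * A = c • B) (μ : R) :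
    MapsTo B (A.maxGenEigenspace μ) (A.maxGenEigenspace (μ + c)) := by
  intro x hx
  obtain ⟨k, hk⟩ := (A.mem_maxGenEigenspace μ x).1 hx
  refine (A.mem_maxGenEigenspace _ _).2 ⟨k, ?_⟩
  rw [← Module.End.mul_apply, ← ((semiconjBy_sub_smul_one_of_mul_sub_mul h μ).pow_right k).eq,
    Module.End.mul_apply, hk, map_zero]

lemma mapsTo_pow_maxGenEigenspace_of_mul_sub_mul (h : A * B - B * A = c • B) (μ : R) (k : ℕ) :
    MapsTo (B ^ k) (A.maxGenEigenspace μ) (A.maxGenEigenspace (μ + k * c)) := by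
  induction k with
  | zero => simpa [Module.End.one_eq_id] using mapsTo_id _
  | succ k ih =>
    rw [pow_succ', Nat.cast_succ, add_one_mul, ← add_assoc]
    exact (mapsTo_maxGenEigenspace_of_mul_sub_mul h _).comp ih

lemma mapsTo_range_of_mul_sub_mul (h : A * B - B * A = c • B) :
    MapsTo A (LinearMap.range B) (LinearMap.range B) := by
  rintro _ ⟨y, rfl⟩
  refine ⟨A y + c • y, ?_⟩
  have := congr($h y)
  simp only [LinearMap.sub_apply, mul_apply, LinearMap.smul_apply] at this
  rw [map_add, map_smul, ← this, add_sub_cancel]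

lemma mapsTo_ker_of_mul_sub_mul (h : A * B - B * A = c • B) :
    MapsTo A (LinearMap.ker B) (LinearMap.ker B) := by
  intro x (hx : B x = 0)
  have := congr($h x)
  show B (A x) = 0
  simpa only [LinearMap.sub_apply, mul_apply, LinearMap.smul_apply, hx, map_zero, smul_zero,
    zero_sub, neg_eq_zero] using this

end CommRing

section Field

variable {K V : Type*} [Field K] [AddCommGroup V] [Module K V] [FiniteDimensional K V]
  {A B : End K V} {c : K}

lemma exists_pow_apply_eq_zero_of_mem_maxGenEigenspace [CharZero K]
    (h : A * B - B * A = c • B) (hc : c ≠ 0) {μ : K} {x : V}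
    (hx : x ∈ A.maxGenEigenspace μ) :
    ∃ k : ℕ, (B ^ k) x = 0 := by
  by_contra! hne
  have hinj : Function.Injective fun k : ℕ ↦ μ + k * c := fun k l hkl ↦ by
    simpa [hc] using hkl
  exact Module.Finite.not_linearIndependent_of_infinite _ <|
    (A.independent_maxGenEigenspace.comp hinj).linearIndependent _
      (fun k ↦ mapsTo_pow_maxGenEigenspace_of_mul_sub_mul h μ k hx) hne

lemma exists_mem_maxGenEigenspace_apply_eq_of_mem_range [IsAlgClosed K]
    (h : A * B - B * A = c • B)
    {μ : K} {v : V} (hvB : v ∈ LinearMap.range B) (hvA : v ∈ A.maxGenEigenspace μ) :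
    ∃ w ∈ A.maxGenEigenspace (μ - c), B w = v := by
  obtain ⟨w', rfl⟩ := hvB
  have hw' :
      w' ∈ A.maxGenEigenspace (μ - c) ⊔ ⨆ (ν) (_ : ν ≠ μ - c), A.maxGenEigenspace ν := by
    rw [← iSup_split_single, A.iSup_maxGenEigenspace_eq_top]
    trivial
  obtain ⟨w, hw, w₂, hw₂, rfl⟩ := Submodule.mem_sup.1 hw'
  refine ⟨w, hw, ?_⟩
  have hmap : (⨆ (ν) (_ : ν ≠ μ - c), A.maxGenEigenspace ν).map B ≤
      ⨆ (ν) (_ : ν ≠ μ), A.maxGenEigenspace ν := by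
    simp only [Submodule.map_iSup]
    refine iSup₂_le fun ν hν ↦ le_iSup₂_of_le (ν + c) (by contrapose! hν; rw [← hν]; ring)
      (Submodule.map_le_iff_le_comap.2 (mapsTo_maxGenEigenspace_of_mul_sub_mul h ν))
  have hBw : B w ∈ A.maxGenEigenspace μ := by
    simpa using mapsTo_maxGenEigenspace_of_mul_sub_mul h (μ - c) hw
  have hBw₂ : B w₂ = 0 := by
    refine Submodule.disjoint_def.1 (A.independent_maxGenEigenspace μ) _ ?_
      (hmap (Submodule.mem_map_of_mem hw₂))
    simpa using Submodule.sub_mem _ hvA hBw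
  rw [map_add, hBw₂, add_zero]

lemma disjoint_ker_mul_maxGenEigenspace [CharZero K] {H E F : End K V}
    (hHE : H * E - E * H = (2 : K) • E) (hEF : E * F - F * E = H) {μ : K}
    (hμ : ∀ m : ℕ, μ + m ≠ 0) :
    Disjoint (LinearMap.ker (E * F)) (H.maxGenEigenspace μ) := by
  refine Submodule.disjoint_def.2 fun w (hEFw : E (F w) = 0) hw ↦ ?_
  by_contra hw0
  obtain ⟨m, hm, hm1⟩ :=
    Nat.exists_not_and_succ_of_not_zero_of_exists (p := fun k ↦ (E ^ k) w = 0) (by simpa using hw0)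
      (exists_pow_apply_eq_zero_of_mem_maxGenEigenspace hHE two_ne_zero hw)
  have hu : (E ^ m) w ∈ H.eigenspace (m : K) := by
    have hcomm := congr($(pow_succ_mul_sub_mul_pow_succ (by rw [hHE, two_smul, two_mul]) hEF m) w)
    rw [LinearMap.sub_apply, mul_apply, mul_apply, hm1, map_zero, pow_succ, mul_apply, hEFw,
      map_zero, sub_zero, eq_comm, ← Nat.cast_add_one, mul_apply, natCast_apply] at hcomm
    rw [← Nat.cast_smul_eq_nsmul K] at hcomm
    rw [mem_eigenspace_iff, Nat.cast_smul_eq_nsmul, ← sub_eq_zero]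
    exact (smul_eq_zero.1 hcomm).resolve_left (Nat.cast_ne_zero.2 m.succ_ne_zero)
  have hne : (m : K) ≠ μ + m * 2 := fun h ↦ hμ m (by linear_combination -h)
  exact hm <| Submodule.disjoint_def.1 (H.disjoint_genEigenspace hne ⊤ ⊤) _
    (H.eigenspace_le_maxGenEigenspace hu) (mapsTo_pow_maxGenEigenspace_of_mul_sub_mul hHE μ m hw)

end Field

end Module.End

namespace LinearMap

variable {K U V W : Type*} [Field K] [AddCommGroup U] [Module K U] [AddCommGroup V] [Module K V]
  [AddCommGroup W] [Module K W] [FiniteDimensional K V]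

lemma finrank_range_le_of_disjoint_range_ker {f : U →ₗ[K] V} {g : V →ₗ[K] W}
    (h : Disjoint (range f) (ker g)) : finrank K (range f) ≤ finrank K (range g) := by
  have := Submodule.finrank_add_finrank_le_of_disjoint h
  have := finrank_range_add_finrank_ker g
  omega

lemma isCompl_range_ker_of_disjoint [FiniteDimensional K W] {f : W →ₗ[K] V} {g : V →ₗ[K] W}
    (hfg : Disjoint (range f) (ker g)) (hgf : Disjoint (range g) (ker f)) :
    IsCompl (range f) (ker g) := by
  refine (Submodule.isCompl_iff_disjoint _ _ ?_).2 hfg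
  have := finrank_range_le_of_disjoint_range_ker hgf
  have := finrank_range_add_finrank_ker g
  omega

end LinearMap

section Sl2Triple

-- The commutator Lie ring structure on an associative ring is not a global instance.
attribute [local instance] LieRing.ofAssociativeRing

namespace IsSl2Triple

variable {K V : Type*} [Field K] [CharZero K] [IsAlgClosed K] [AddCommGroup V] [Module K V]
  [FiniteDimensional K V] {H E F : End K V}

lemma disjoint_range_ker (t : IsSl2Triple H E F) :
    Disjoint (LinearMap.range F) (LinearMap.ker E) := by
  have hHE : H * E - E * H = (2 : K) • E := by rw [← Ring.lie_def, t.lie_h_e_smul K]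
  have hHF : H * F - F * H = (-2 : K) • F := by
    rw [← Ring.lie_def, t.lie_lie_smul_f K, neg_smul]
  have hEF : E * F - F * E = H := by rw [← Ring.lie_def, t.lie_e_f]
  have hW : MapsTo H (LinearMap.range F ⊓ LinearMap.ker E : Submodule K V)
      (LinearMap.range F ⊓ LinearMap.ker E : Submodule K V) :=
    (mapsTo_range_of_mul_sub_mul hHF).inter_inter (mapsTo_ker_of_mul_sub_mul hHE)
  rw [disjoint_iff]
  by_contra hne
  have : Nontrivial ↥(LinearMap.range F ⊓ LinearMap.ker E) :=
    Submodule.nontrivial_iff_ne_bot.2 hne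
  obtain ⟨μ, hμ⟩ := Module.End.exists_eigenvalue (H.restrict hW)
  obtain ⟨⟨v, hvF, hvE⟩, hv⟩ := hμ.exists_hasEigenvector
  have hHv : H v = μ • v := congr_arg Subtype.val hv.apply_eq_smul
  have P : t.HasPrimitiveVectorWith v μ := ⟨fun h ↦ hv.2 (Subtype.ext h), hHv, hvE⟩
  obtain ⟨n, rfl⟩ := P.exists_nat
  obtain ⟨w, hw, rfl⟩ := exists_mem_maxGenEigenspace_apply_eq_of_mem_range hHF hvF
    (H.eigenspace_le_maxGenEigenspace (mem_eigenspace_iff.2 hHv))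
  have hμ : ∀ m : ℕ, (n : K) - -2 + m ≠ 0 := fun m h ↦ by
    have : ((n + m + 2 : ℕ) : K) = 0 := by push_cast; linear_combination h
    exact (n + m + 1).succ_ne_zero (Nat.cast_eq_zero.1 this)
  have hw0 : w = 0 :=
    Submodule.disjoint_def.1 (disjoint_ker_mul_maxGenEigenspace hHE hEF hμ) w hvE hw
  exact P.ne_zero (by rw [hw0, map_zero])

lemma isCompl_range_ker (t : IsSl2Triple H E F) : IsCompl (LinearMap.range F) (LinearMap.ker E) :=
  LinearMap.isCompl_range_ker_of_disjoint t.disjoint_range_ker t.symm.disjoint_range_ker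

end IsSl2Triple

end Sl2Triple

/-- A finite-dimensional representation of `sl(2,ℂ)` decomposes as the internal
direct sum of the range of `F` and the kernel of `E`. -/
theorem sl2_isCompl_range_F_ker_E
    (V : Type*) [AddCommGroup V] [Module ℂ V] [FiniteDimensional ℂ V]
    (H E F : Module.End ℂ V)
    (hHE : ⁅H, E⁆ = (2 : ℂ) • E)
    (hHF : ⁅H, F⁆ = (-2 : ℂ) • F)
    (hEF : ⁅E, F⁆ = H) :
    IsCompl (LinearMap.range F) (LinearMap.ker E) := by
  by_cases hH : H = 0
  · rw [hH, Ring.lie_def, zero_mul, mul_zero, sub_self, eq_comm, smul_eq_zero] at hHE hHF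
    rw [hHE.resolve_left two_ne_zero, hHF.resolve_left (by norm_num), LinearMap.range_zero,
      LinearMap.ker_zero]
    exact isCompl_bot_top
  let := LieRing.ofAssociativeRing (A := Module.End ℂ V)
  exact IsSl2Triple.isCompl_range_ker
    { h_ne_zero := hH
      lie_e_f := hEF
      lie_h_e_nsmul := by rw [hHE, two_smul, two_nsmul]
      lie_h_f_nsmul := by rw [hHF, neg_smul, two_smul, two_nsmul] }
end

section
/- Let V be a finite-dimensional representation of sl(2,ℂ) with standard basis (H,E,F). Then the kernel of the action of E and the kernel of the action of F have the same dimension. -/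
/-!
`E` and `F` are nilpotent: `x ↦ ⁅H, x⁆` has only finitely many eigenvalues on `End V`, while a
nonzero power `E ^ n` would be an eigenvector with eigenvalue `2 n`. Hence the Weyl element
`w = exp E * exp (-F) * exp E` is an invertible operator. Conjugation by `exp a` is `exp (ad a)`,
which on the triple `H, E, F` is a polynomial of degree two in `ad a`; evaluating it gives
`w * E = -(F * w)`, so `w` maps `ker E` isomorphically onto `ker F`.
-/

open LieAlgebra

section OfAssociative

attribute [local instance] LieRing.ofAssociativeRing

section Exp

open IsNilpotent

variable {A : Type*} [Ring A] [Algebra ℚ A]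

theorem IsNilpotent.exp_mulLeft {b : A} (hb : IsNilpotent b) :
    exp (LinearMap.mulLeft ℚ b) = LinearMap.mulLeft ℚ (exp b) :=
  (hb.map_exp (Algebra.lmul ℚ A)).symm

theorem IsNilpotent.exp_mulRight {b : A} (hb : IsNilpotent b) :
    exp (LinearMap.mulRight ℚ b) = LinearMap.mulRight ℚ (exp b) := by
  obtain ⟨k, hk⟩ := hb
  have hk' : LinearMap.mulRight ℚ b ^ k = 0 := by
    rw [LinearMap.pow_mulRight, hk, LinearMap.mulRight_zero_eq_zero]
  ext x
  simp [exp_eq_sum hk, exp_eq_sum hk', LinearMap.pow_mulRight, Finset.mul_sum]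

theorem IsNilpotent.exp_ad_apply {a : A} (ha : IsNilpotent a) (x : A) :
    exp (ad ℚ A a) x = exp a * x * exp (-a) := by
  have had : ad ℚ A a = LinearMap.mulLeft ℚ a + LinearMap.mulRight ℚ (-a) := by
    ext y
    simp [LieRing.of_associative_ring_bracket, sub_eq_add_neg]
  rw [had, exp_add_of_commute (LinearMap.commute_mulLeft_right a (-a))
      ((LinearMap.isNilpotent_mulLeft_iff ℚ a).mpr ha)
      ((LinearMap.isNilpotent_mulRight_iff ℚ (-a)).mpr ha.neg),
    ha.neg.exp_mulRight, ha.exp_mulLeft]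
  simp [mul_assoc]

theorem IsNilpotent.exp_mul_of_lie_lie_lie_eq_zero {a x : A} (ha : IsNilpotent a)
    (hx : ⁅a, ⁅a, ⁅a, x⁆⁆⁆ = 0) :
    exp a * x = (x + ⁅a, x⁆ + (2⁻¹ : ℚ) • ⁅a, ⁅a, x⁆⁆) * exp a := by
  have h3 : (ad ℚ A a ^ 3) • x = 0 := by
    rwa [Module.End.smul_def, pow_succ', pow_two, Module.End.mul_apply, Module.End.mul_apply]
  have hconj := exp_smul_eq_sum h3 (ad_nilpotent_of_nilpotent ha)
  rw [Module.End.smul_def, ha.exp_ad_apply] at hconj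
  rw [← mul_one (exp a * x), ← ha.exp_neg_mul_exp_self, ← mul_assoc, hconj]
  simp [Finset.sum_range_succ, pow_two, Module.End.mul_apply]

end Exp

section Nilpotent

variable {A : Type*} [Ring A]

theorem lie_pow_eq_smul_of_lie_eq_smul {R : Type*} [CommRing R] [Algebra R A] {a x : A} {c : R}
    (h : ⁅a, x⁆ = c • x) (n : ℕ) : ⁅a, x ^ n⁆ = (n * c) • x ^ n := by
  induction n with
  | zero => simp [LieRing.of_associative_ring_bracket]
  | succ n ih =>
    have hleibniz : ⁅a, x ^ n * x⁆ = ⁅a, x ^ n⁆ * x + x ^ n * ⁅a, x⁆ := by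
      simp only [LieRing.of_associative_ring_bracket]
      noncomm_ring
    rw [pow_succ, hleibniz, ih, h, smul_mul_assoc, mul_smul_comm, ← add_smul]
    push_cast
    ring_nf

theorem isNilpotent_of_lie_eq_smul {K : Type*} [Field K] [CharZero K] [Algebra K A]
    [FiniteDimensional K A] {a x : A} {c : K} (hc : c ≠ 0) (h : ⁅a, x⁆ = c • x) :
    IsNilpotent x := by
  have hfin : {n : ℕ | (ad K A a).HasEigenvalue (n * c)}.Finite :=
    (ad K A a).finite_hasEigenvalue.preimage fun m _ n _ hmn => by simpa [hc] using hmn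
  obtain ⟨n, hn⟩ := hfin.exists_notMem
  refine ⟨n, by_contra fun hne => hn ?_⟩
  exact Module.End.hasEigenvalue_of_hasEigenvector
    ⟨Module.End.mem_eigenspace_iff.mpr (lie_pow_eq_smul_of_lie_eq_smul h n), hne⟩

end Nilpotent

section Weyl

open IsNilpotent

variable {A : Type*} [Ring A] [Algebra ℚ A]

noncomputable def sl2WeylElement (e f : A) : A :=
  exp e * exp (-f) * exp e

theorem isUnit_sl2WeylElement {e f : A} (he : IsNilpotent e) (hf : IsNilpotent f) :
    IsUnit (sl2WeylElement e f) :=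
  ((isUnit_exp he).mul (isUnit_exp hf.neg)).mul (isUnit_exp he)

theorem sl2WeylElement_mul_eq {h e f : A} (he : IsNilpotent e) (hf : IsNilpotent f)
    (hhe : ⁅h, e⁆ = 2 • e) (hhf : ⁅h, f⁆ = -(2 • f)) (hef : ⁅e, f⁆ = h) :
    sl2WeylElement e f * e = -(f * sl2WeylElement e f) := by
  have half_two (y : A) : (2⁻¹ : ℚ) • (2 • y) = y := by
    rw [← Nat.cast_smul_eq_nsmul ℚ, smul_smul]
    norm_num
  have lie_nsmul_self (y : A) (n : ℕ) : ⁅y, n • y⁆ = 0 := by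
    rw [lie_nsmul, lie_self, smul_zero]
  have heh : ⁅e, h⁆ = -(2 • e) := by rw [← lie_skew, hhe]
  have hfe : ⁅-f, e⁆ = h := by rw [neg_lie, ← lie_skew, hef, neg_neg]
  have hfh : ⁅-f, h⁆ = -(2 • f) := by rw [neg_lie, ← lie_skew, hhf, neg_neg]
  have conj_e_e : exp e * e = e * exp e := by
    simpa using he.exp_mul_of_lie_lie_lie_eq_zero (x := e) (by simp)
  have conj_e_h : exp e * h = (h - 2 • e) * exp e := by
    rw [he.exp_mul_of_lie_lie_lie_eq_zero
        (by rw [heh, lie_neg, lie_nsmul_self, neg_zero, lie_zero]),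
      heh, lie_neg, lie_nsmul_self, neg_zero, smul_zero, add_zero, sub_eq_add_neg]
  have conj_e_f : exp e * f = (f + h - e) * exp e := by
    rw [he.exp_mul_of_lie_lie_lie_eq_zero (by rw [hef, heh, lie_neg, lie_nsmul_self, neg_zero]),
      hef, heh, smul_neg, half_two, sub_eq_add_neg]
  have conj_f_e : exp (-f) * e = (e + h - f) * exp (-f) := by
    rw [hf.neg.exp_mul_of_lie_lie_lie_eq_zero
        (by rw [hfe, hfh, lie_neg, neg_lie, lie_nsmul_self, neg_zero, neg_zero]),
      hfe, hfh, smul_neg, half_two, sub_eq_add_neg]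
  calc sl2WeylElement e f * e = exp e * (exp (-f) * e) * exp e := by
        rw [sl2WeylElement, mul_assoc, conj_e_e]
        noncomm_ring
    _ = (exp e * e + exp e * h - exp e * f) * exp (-f) * exp e := by
        rw [conj_f_e]
        noncomm_ring
    _ = (e + (h - 2 • e) - (f + h - e)) * sl2WeylElement e f := by
        rw [conj_e_e, conj_e_h, conj_e_f, sl2WeylElement]
        noncomm_ring
    _ = -(f * sl2WeylElement e f) := by
        rw [two_nsmul]
        noncomm_ring

end Weyl

end OfAssociative

theorem finrank_ker_eq_of_mul_eq_mul {K V : Type*} [Ring K] [AddCommGroup V] [Module K V]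
    {f g w : Module.End K V} (hw : IsUnit w) (h : w * f = g * w) :
    Module.finrank K (LinearMap.ker f) = Module.finrank K (LinearMap.ker g) := by
  let e := LinearEquiv.ofBijective w ((Module.End.isUnit_iff w).mp hw)
  have hker : LinearMap.ker f = (LinearMap.ker g).comap (e : V →ₗ[K] V) := by
    ext x
    rw [LinearMap.mem_ker, Submodule.mem_comap, LinearMap.mem_ker, ← e.map_eq_zero_iff]
    exact iff_of_eq (congrArg (· = 0) (LinearMap.congr_fun h x))
  rw [hker, Submodule.comap_equiv_eq_map_symm, LinearEquiv.finrank_map_eq]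

/-- In a finite-dimensional representation of `sl(2,ℂ)`, the kernels of `E` and
of `F` have the same dimension. -/
theorem sl2_finrank_ker_E_eq_finrank_ker_F
    (V : Type*) [AddCommGroup V] [Module ℂ V] [FiniteDimensional ℂ V]
    (H E F : Module.End ℂ V)
    (hHE : ⁅H, E⁆ = (2 : ℂ) • E)
    (hHF : ⁅H, F⁆ = (-2 : ℂ) • F)
    (hEF : ⁅E, F⁆ = H) :
    Module.finrank ℂ (LinearMap.ker E) = Module.finrank ℂ (LinearMap.ker F) := by
  -- `IsNilpotent.exp` lives on `ℚ`-algebras; this structure is not inferred on `Module.End ℂ V`.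
  let : Algebra ℚ (Module.End ℂ V) := Algebra.compHom _ (algebraMap ℚ ℂ)
  have hE : IsNilpotent E := isNilpotent_of_lie_eq_smul two_ne_zero hHE
  have hF : IsNilpotent F := isNilpotent_of_lie_eq_smul (by norm_num) hHF
  have hweyl := sl2WeylElement_mul_eq hE hF (by rw [hHE, two_smul, two_nsmul])
    (by rw [hHF, neg_smul, two_smul, two_nsmul]) hEF
  rw [← LinearMap.ker_neg F]
  exact finrank_ker_eq_of_mul_eq_mul (isUnit_sl2WeylElement hE hF) (by rw [hweyl, neg_mul])
end

section
/- Let V be a finite-dimensional representation of sl(2,ℂ) with standard basis (H,E,F). If every eigenvalue of the action of H on V is an even integer, then dim ker(E acting on V) = dim ker(H acting on V). -/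
/-!
The key fact is that if `z ≠ 0`, `H z = ν z` and `F (E z) = 0`, then `ν ∈ ℕ`: the string
`z, F z, F² z, …` consists of eigenvectors with distinct eigenvalues, so it terminates, and
`E F^(k+1) z = (k+1)(ν - k) F^k z` forces `ν = k` at its last nonzero term `F^k z`.

Applied to `ker E`, this shows that `H` acts semisimply on `ker E` with eigenvalues in `ℕ`: a Jordan
block `H v = n v + u` would make `F^(n+1) v` such a vector of eigenvalue `-n-2`, hence zero, while
`E F^(n+1) v = (n+1) F^n u ≠ 0`. Applied to the triple `(-H, F, E)`, it shows that `E F` is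
injective, hence bijective, on the eigenspace `V_μ` of `H` for `μ = n + 2`, so `E` maps `V_n`
onto `V_(n+2)`. Thus `ker E` lies in `U = ⨁_{n ∈ ℕ} V_n`, which `E` maps onto `⨁_{n ≥ 2} V_n`,
and rank–nullity gives `dim ker E = dim V_0 + dim V_1`. Even eigenvalues force `V_1 = 0`.
-/

open Module Module.End LinearMap

namespace Sl2Rep

section Identities

variable {R V : Type*} [CommRing R] [AddCommGroup V] [Module R V] {H E F : Module.End R V}

lemma h_apply_e (hHE : ⁅H, E⁆ = (2 : R) • E) (x : V) :
    H (E x) = E (H x) + (2 : R) • E x := by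
  have h := LinearMap.congr_fun hHE x
  simp only [Ring.lie_def, LinearMap.sub_apply, Module.End.mul_apply, LinearMap.smul_apply] at h
  linear_combination (norm := module) h

lemma h_apply_f (hHF : ⁅H, F⁆ = (-2 : R) • F) (x : V) :
    H (F x) = F (H x) - (2 : R) • F x := by
  have h := LinearMap.congr_fun hHF x
  simp only [Ring.lie_def, LinearMap.sub_apply, Module.End.mul_apply, LinearMap.smul_apply] at h
  linear_combination (norm := module) h

lemma e_apply_f (hEF : ⁅E, F⁆ = H) (x : V) : E (F x) = F (E x) + H x := by
  have h := LinearMap.congr_fun hEF x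
  simp only [Ring.lie_def, LinearMap.sub_apply, Module.End.mul_apply] at h
  linear_combination (norm := module) h

lemma pow_succ_apply (T : Module.End R V) (k : ℕ) (x : V) : (T ^ (k + 1)) x = (T ^ k) (T x) := by
  rw [pow_succ, Module.End.mul_apply]

lemma h_apply_f_pow (hHF : ⁅H, F⁆ = (-2 : R) • F) (k : ℕ) (x : V) :
    H ((F ^ k) x) = (F ^ k) (H x) - (2 * k : R) • (F ^ k) x := by
  induction k generalizing x with
  | zero => simp
  | succ k ih =>
    simp only [pow_succ_apply, ih, h_apply_f hHF, map_sub, map_smul]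
    push_cast
    module

lemma e_apply_f_pow_succ (hHF : ⁅H, F⁆ = (-2 : R) • F) (hEF : ⁅E, F⁆ = H) (k : ℕ) (x : V) :
    E ((F ^ (k + 1)) x) =
      (F ^ (k + 1)) (E x) + ((k : R) + 1) • (F ^ k) (H x) - (((k : R) + 1) * k) • (F ^ k) x := by
  induction k generalizing x with
  | zero => simpa using e_apply_f hEF x
  | succ k ih =>
    simp only [pow_succ_apply _ (k + 1), ih, e_apply_f hEF, h_apply_f hHF, map_add, map_sub,
      map_smul]
    simp only [pow_succ_apply]
    push_cast
    module

lemma h_mem_ker_e (hHE : ⁅H, E⁆ = (2 : R) • E) {x : V} (hx : x ∈ ker E) : H x ∈ ker E := by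
  have h := h_apply_e hHE x
  rw [mem_ker] at hx ⊢
  rw [hx, map_zero, smul_zero, add_zero] at h
  exact h.symm

lemma e_mem_eigenspace (hHE : ⁅H, E⁆ = (2 : R) • E) {μ : R} {x : V} (hx : x ∈ H.eigenspace μ) :
    E x ∈ H.eigenspace (μ + 2) := by
  rw [mem_eigenspace_iff] at hx ⊢
  rw [h_apply_e hHE, hx, map_smul, add_smul]

lemma f_mem_eigenspace (hHF : ⁅H, F⁆ = (-2 : R) • F) {μ : R} {x : V} (hx : x ∈ H.eigenspace μ) :
    F x ∈ H.eigenspace (μ - 2) := by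
  rw [mem_eigenspace_iff] at hx ⊢
  rw [h_apply_f hHF, hx, map_smul, sub_smul]

variable {ν : R} {z : V}

lemma h_apply_f_pow_of_apply_eq_smul (hHF : ⁅H, F⁆ = (-2 : R) • F) (hz : H z = ν • z) (k : ℕ) :
    H ((F ^ k) z) = (ν - 2 * k) • (F ^ k) z := by
  rw [h_apply_f_pow hHF, hz, map_smul, sub_smul]

lemma e_apply_f_pow_succ_of_f_e_eq_zero (hHF : ⁅H, F⁆ = (-2 : R) • F) (hEF : ⁅E, F⁆ = H)
    (hz : H z = ν • z) (hFEz : F (E z) = 0) (k : ℕ) :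
    E ((F ^ (k + 1)) z) = (((k : R) + 1) * (ν - k)) • (F ^ k) z := by
  rw [e_apply_f_pow_succ hHF hEF, pow_succ_apply, hFEz, map_zero, zero_add, hz, map_smul]
  module

end Identities

section Strings

variable {𝕜 V : Type*} [Field 𝕜] [CharZero 𝕜] [AddCommGroup V] [Module 𝕜 V]
  [FiniteDimensional 𝕜 V] {H E F : Module.End 𝕜 V} {ν : 𝕜} {z : V}

lemma exists_f_pow_apply_eq_zero (hHF : ⁅H, F⁆ = (-2 : 𝕜) • F) (hz : H z = ν • z) :
    ∃ k, (F ^ k) z = 0 := by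
  by_contra! hne
  have hinj : Function.Injective fun k : ℕ ↦ ν - 2 * k := fun i j hij ↦ by
    simpa using hij
  exact Module.Finite.not_linearIndependent_of_infinite _
    (H.eigenvectors_linearIndependent' _ hinj _ fun k ↦
      ⟨mem_eigenspace_iff.2 (h_apply_f_pow_of_apply_eq_smul hHF hz k), hne k⟩)

lemma exists_nat_of_f_e_eq_zero (hHF : ⁅H, F⁆ = (-2 : 𝕜) • F) (hEF : ⁅E, F⁆ = H) (hz0 : z ≠ 0)
    (hz : H z = ν • z) (hFEz : F (E z) = 0) :
    ∃ n : ℕ, ν = n ∧ (F ^ n) z ≠ 0 ∧ (F ^ (n + 1)) z = 0 := by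
  obtain ⟨n, hn, hn1⟩ := Nat.exists_not_and_succ_of_not_zero_of_exists (by simpa using hz0)
    (exists_f_pow_apply_eq_zero hHF hz)
  refine ⟨n, ?_, hn, hn1⟩
  have := e_apply_f_pow_succ_of_f_e_eq_zero hHF hEF hz hFEz n
  rw [hn1, map_zero, eq_comm, smul_eq_zero, mul_eq_zero, sub_eq_zero] at this
  exact (this.resolve_right hn).resolve_left (Nat.cast_add_one_ne_zero n)

lemma exists_nat_of_e_f_eq_zero (hHE : ⁅H, E⁆ = (2 : 𝕜) • E) (hEF : ⁅E, F⁆ = H) (hz0 : z ≠ 0)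
    (hz : H z = ν • z) (hEFz : E (F z) = 0) : ∃ n : ℕ, ν = -n := by
  have hHE' : ⁅-H, E⁆ = (-2 : 𝕜) • E := by
    rw [Ring.lie_def] at hHE ⊢
    rw [neg_mul, mul_neg, sub_neg_eq_add, neg_add_eq_sub, ← neg_sub, hHE, neg_smul]
  have hFE : ⁅F, E⁆ = -H := by
    rw [Ring.lie_def] at hEF ⊢
    rw [← hEF, neg_sub]
  obtain ⟨n, hn, -⟩ := exists_nat_of_f_e_eq_zero hHE' hFE hz0
    (by rw [LinearMap.neg_apply, hz, neg_smul]) hEFz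
  exact ⟨n, by rw [← hn, neg_neg]⟩

lemma apply_eq_smul_of_e_eq_zero_of_sub_mem_eigenspace (hHE : ⁅H, E⁆ = (2 : 𝕜) • E)
    (hHF : ⁅H, F⁆ = (-2 : 𝕜) • F) (hEF : ⁅E, F⁆ = H) {μ : 𝕜} {v : V} (hv : E v = 0)
    (hu : H v - μ • v ∈ H.eigenspace μ) : H v = μ • v := by
  set u := H v - μ • v with hu_def
  rw [mem_eigenspace_iff] at hu
  by_contra hne
  have hu0 : u ≠ 0 := sub_ne_zero.2 hne
  have hEu : E u = 0 := by
    rw [hu_def, map_sub, map_smul, hv, smul_zero, sub_zero]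
    exact h_mem_ker_e hHE hv
  obtain ⟨n, rfl, hFn, hFn1⟩ := exists_nat_of_f_e_eq_zero hHF hEF hu0 hu (by rw [hEu, map_zero])
  have hHv : H v = (n : 𝕜) • v + u := by rw [hu_def]; abel
  set z := (F ^ (n + 1)) v
  have hHz : H z = (-((n : 𝕜) + 2)) • z := by
    rw [h_apply_f_pow hHF, hHv, map_add, map_smul, hFn1]
    push_cast
    module
  have hEz : E z = ((n : 𝕜) + 1) • (F ^ n) u := by
    rw [e_apply_f_pow_succ hHF hEF, hv, hHv, map_zero, map_add, map_smul]
    module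
  have hFEz : F (E z) = 0 := by
    rw [hEz, map_smul, ← Module.End.mul_apply, ← pow_succ', hFn1, smul_zero]
  have hz : z = 0 := by
    by_contra hz0
    obtain ⟨m, hm, -⟩ := exists_nat_of_f_e_eq_zero hHF hEF hz0 hHz hFEz
    have : ((m + n + 2 : ℕ) : 𝕜) = 0 := by push_cast; linear_combination -hm
    exact absurd (Nat.cast_eq_zero.1 this) (by omega)
  rw [hz, map_zero, eq_comm, smul_eq_zero] at hEz
  exact hEz.elim (Nat.cast_add_one_ne_zero n) hFn

lemma ker_e_inf_maxGenEigenspace_le_eigenspace (hHE : ⁅H, E⁆ = (2 : 𝕜) • E)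
    (hHF : ⁅H, F⁆ = (-2 : 𝕜) • F) (hEF : ⁅E, F⁆ = H) (μ : 𝕜) :
    ker E ⊓ H.maxGenEigenspace μ ≤ H.eigenspace μ := by
  rintro x ⟨hxE, hxμ⟩
  obtain ⟨k, hk⟩ := (mem_maxGenEigenspace H μ x).1 hxμ
  rw [mem_eigenspace_iff]
  clear hxμ
  induction k generalizing x with
  | zero => simp_all
  | succ k ih =>
    rw [pow_succ_apply, show (H - μ • 1) x = H x - μ • x by simp] at hk
    exact apply_eq_smul_of_e_eq_zero_of_sub_mem_eigenspace hHE hHF hEF hxE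
      (mem_eigenspace_iff.2 (ih (sub_mem (h_mem_ker_e hHE hxE) (Submodule.smul_mem _ _ hxE)) hk))

lemma ker_e_le_iSup_eigenspace_nat [IsAlgClosed 𝕜] (hHE : ⁅H, E⁆ = (2 : 𝕜) • E)
    (hHF : ⁅H, F⁆ = (-2 : 𝕜) • F) (hEF : ⁅E, F⁆ = H) :
    ker E ≤ ⨆ n : ℕ, H.eigenspace (n : 𝕜) := by
  refine (Submodule.eq_iSup_inf_genEigenspace ⊤ (fun x hx ↦ h_mem_ker_e hHE hx)
    (iSup_maxGenEigenspace_eq_top H)).le.trans (iSup_le fun μ x hx ↦ ?_)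
  have hxμ := mem_eigenspace_iff.1 (ker_e_inf_maxGenEigenspace_le_eigenspace hHE hHF hEF μ hx)
  rcases eq_or_ne x 0 with rfl | hx0
  · exact zero_mem _
  obtain ⟨n, rfl, -⟩ := exists_nat_of_f_e_eq_zero hHF hEF hx0 hxμ (by rw [mem_ker.1 hx.1, map_zero])
  exact Submodule.mem_iSup_of_mem n (mem_eigenspace_iff.2 hxμ)

lemma eigenspace_le_map_e (hHE : ⁅H, E⁆ = (2 : 𝕜) • E) (hHF : ⁅H, F⁆ = (-2 : 𝕜) • F)
    (hEF : ⁅E, F⁆ = H) (n : ℕ) :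
    H.eigenspace ((n + 2 : ℕ) : 𝕜) ≤ (H.eigenspace (n : 𝕜)).map E := by
  have hn : ((n + 2 : ℕ) : 𝕜) - 2 = n := by push_cast; ring
  set p := H.eigenspace ((n + 2 : ℕ) : 𝕜)
  have hmaps : ∀ y ∈ p, (E * F) y ∈ p := fun y hy ↦ by
    have h := e_mem_eigenspace hHE (f_mem_eigenspace hHF hy)
    rwa [sub_add_cancel] at h
  have hinj : Set.InjOn (E * F) p := fun y hy y' hy' hyy' ↦ by
    by_contra hne
    have hw : y - y' ∈ p := sub_mem hy hy'
    have hEFw : E (F (y - y')) = 0 := by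
      rw [← Module.End.mul_apply, map_sub, hyy', sub_self]
    obtain ⟨m, hm⟩ := exists_nat_of_e_f_eq_zero hHE hEF (sub_ne_zero.2 hne)
      (mem_eigenspace_iff.1 hw) hEFw
    have : ((m + n + 2 : ℕ) : 𝕜) = 0 := by push_cast at hm ⊢; linear_combination hm
    exact absurd (Nat.cast_eq_zero.1 this) (by omega)
  intro x hx
  obtain ⟨y, hy, rfl⟩ := (LinearMap.injOn_iff_surjOn hmaps).1 hinj hx
  exact ⟨F y, hn ▸ f_mem_eigenspace hHF hy, rfl⟩

lemma map_e_iSup_eigenspace_nat (hHE : ⁅H, E⁆ = (2 : 𝕜) • E) (hHF : ⁅H, F⁆ = (-2 : 𝕜) • F)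
    (hEF : ⁅E, F⁆ = H) :
    (⨆ n : ℕ, H.eigenspace (n : 𝕜)).map E = ⨆ n : ℕ, H.eigenspace ((n + 2 : ℕ) : 𝕜) := by
  rw [Submodule.map_iSup]
  refine le_antisymm (iSup_mono fun n ↦ Submodule.map_le_iff_le_comap.2 fun x hx ↦ ?_)
    (iSup_mono (eigenspace_le_map_e hHE hHF hEF))
  simpa [add_comm] using e_mem_eigenspace hHE hx

end Strings

section Counting

variable {K V : Type*} [DivisionRing K] [AddCommGroup V] [Module K V] [FiniteDimensional K V]

lemma finrank_sup_of_disjoint {P Q : Submodule K V} (hPQ : Disjoint P Q) :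
    finrank K ↥(P ⊔ Q) = finrank K P + finrank K Q := by
  rw [← Submodule.finrank_sup_add_finrank_inf_eq, hPQ.eq_bot, finrank_bot, add_zero]

lemma finrank_ker_eq_of_map_sup_eq {T : Module.End K V} {P Q : Submodule K V}
    (hPQ : Disjoint P Q) (hker : ker T ≤ P ⊔ Q) (hmap : (P ⊔ Q).map T = Q) :
    finrank K (ker T) = finrank K P := by
  have h := LinearMap.finrank_range_add_finrank_ker (T.domRestrict (P ⊔ Q))
  rw [LinearMap.range_domRestrict, hmap, LinearMap.ker_domRestrict,
    (Submodule.comapSubtypeEquivOfLe hker).finrank_eq, finrank_sup_of_disjoint hPQ] at h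
  omega

end Counting

theorem finrank_ker_e_eq_finrank_eigenspace_add {𝕜 V : Type*} [Field 𝕜] [CharZero 𝕜]
    [IsAlgClosed 𝕜] [AddCommGroup V] [Module 𝕜 V] [FiniteDimensional 𝕜 V] {H E F : Module.End 𝕜 V}
    (hHE : ⁅H, E⁆ = (2 : 𝕜) • E) (hHF : ⁅H, F⁆ = (-2 : 𝕜) • F) (hEF : ⁅E, F⁆ = H) :
    finrank 𝕜 (ker E) = finrank 𝕜 (H.eigenspace 0) + finrank 𝕜 (H.eigenspace 1) := by
  set W : ℕ → Submodule 𝕜 V := fun n ↦ H.eigenspace (n : 𝕜)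
  have hW : iSupIndep W := H.eigenspaces_iSupIndep.comp Nat.cast_injective
  have h1 : W 1 ⊔ ⨆ n, W (n + 2) = ⨆ n, W (n + 1) := sup_iSup_nat_succ fun n ↦ W (n + 1)
  have hdisj : Disjoint (W 0 ⊔ W 1) (⨆ n, W (n + 2)) := by
    refine Disjoint.disjoint_sup_left_of_disjoint_sup_right ?_ ?_
    · exact (hW.disjoint_biSup (y := {n | n ≠ 1}) (by simp)).mono_right
        (iSup_le fun n ↦ le_biSup W (show n + 2 ≠ 1 by omega))
    · rw [h1]
      exact (hW.disjoint_biSup (y := {n | n ≠ 0}) (by simp)).mono_right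
        (iSup_le fun n ↦ le_biSup W (Nat.succ_ne_zero n))
  have hU : W 0 ⊔ W 1 ⊔ ⨆ n, W (n + 2) = ⨆ n, W n := by
    rw [sup_assoc, h1, sup_iSup_nat_succ]
  rw [finrank_ker_eq_of_map_sup_eq hdisj (hU ▸ ker_e_le_iSup_eigenspace_nat hHE hHF hEF)
    (hU ▸ map_e_iSup_eigenspace_nat hHE hHF hEF), finrank_sup_of_disjoint
      (hW.pairwiseDisjoint (by norm_num : (0 : ℕ) ≠ 1))]
  rw [show W 0 = H.eigenspace 0 by simp [W], show W 1 = H.eigenspace 1 by simp [W]]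

end Sl2Rep

/-- If every eigenvalue of `H` on a finite-dimensional representation of
`sl(2,ℂ)` is an even integer, then `dim ker E = dim ker H`. -/
theorem sl2_finrank_ker_E_eq_finrank_ker_H_of_even_eigenvalues
    (V : Type*) [AddCommGroup V] [Module ℂ V] [FiniteDimensional ℂ V]
    (H E F : Module.End ℂ V)
    (hHE : ⁅H, E⁆ = (2 : ℂ) • E)
    (hHF : ⁅H, F⁆ = (-2 : ℂ) • F)
    (hEF : ⁅E, F⁆ = H)
    (heven : ∀ μ : ℂ, Module.End.HasEigenvalue H μ → ∃ k : ℤ, μ = 2 * k) :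
    Module.finrank ℂ (LinearMap.ker E) = Module.finrank ℂ (LinearMap.ker H) := by
  have hodd : H.eigenspace 1 = ⊥ := by
    by_contra h
    obtain ⟨k, hk⟩ := heven 1 (hasEigenvalue_iff.2 h)
    have : (1 : ℤ) = 2 * k := by exact_mod_cast hk
    omega
  rw [Sl2Rep.finrank_ker_e_eq_finrank_eigenspace_add hHE hHF hEF, hodd, finrank_bot, add_zero,
    eigenspace_zero]
end
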